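/- For M ≥ 1 and a(x',x) = (1/M) min(1, p(x')q(x|x')/(p(x)q(x'|x))), the detailed balance equation p(x)q(x'|x)a(x',x) = p(x')q(x|x')a(x,x') holds for all x, x'. -/
import Mathlib


/-- For `M ≥ 1`, the scaled Metropolis acceptance function
`a(x',x) = (1/M) * min 1 (p x' * q x' x / (p x * q x x'))` satisfies the
detailed balance equation. `q x x'` denotes `q(x'|x)`. -/
theorem stmt3 {X : Type*} (p : X → ℝ) (q : X → X → ℝ)
    (hp : ∀ x, 0 < p x) (hq : ∀ x x', 0 < q x x')
    (M : ℝ) (hM : 1 ≤ M)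
    (a : X → X → ℝ)
    (ha : ∀ x' x, a x' x = (1 / M) * min 1 (p x' * q x' x / (p x * q x x'))) :
    ∀ x x', p x * q x x' * a x' x = p x' * q x' x * a x x' := by
  intro x x'
  rw [ha, ha]
  set b := p x * q x x' with hb
  set c := p x' * q x' x with hc
  have hbpos : 0 < b := mul_pos (hp x) (hq x x')
  have hcpos : 0 < c := mul_pos (hp x') (hq x' x)
  have h1 : b * (min 1 (c / b)) = min b c := by
    rw [mul_min_of_nonneg _ _ hbpos.le, mul_one, mul_div_cancel₀ _ hbpos.ne']
  have h2 : c * (min 1 (b / c)) = min c b := by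
    rw [mul_min_of_nonneg _ _ hcpos.le, mul_one, mul_div_cancel₀ _ hcpos.ne']
  calc b * (1 / M * min 1 (c / b)) = 1 / M * (b * min 1 (c / b)) := by ring
    _ = 1 / M * (c * min 1 (b / c)) := by rw [h1, h2, min_comm]
    _ = c * (1 / M * min 1 (b / c)) := by ring
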